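/- Let α_1, …, α_{N+N_r−1} be pairwise distinct nonzero elements of a field F, with V, G_n, G̃, S_n = V G_n^{-1} as above. Fix n ∈ {1,…,N}, a subset N' ⊆ {1,…,N} with |N'| = N_r, and vectors w ∈ F^{N_r} and q ∈ F^{N_r−1}. Define the message vector m ∈ F^{N'} by m_i = (V w)_i + (S_n G̃ q)_i for i ∈ N'. Then e_1ᵀ · (rows_{N'}(S_n))^{-1} · m = (V w)_n, where rows_{N'}(S_n) denotes the N_r × N_r submatrix of S_n with rows indexed by N', and e_1 is the first standard basis vector of F^{N_r}. -/

import Mathlib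

variable {F : Type} [Field F] {N r : ℕ}

/-- The `N × (r+1)` Vandermonde matrix `V` with nodes `α_1, …, α_N`. -/
def Vmat (α : Fin N → F) : Matrix (Fin N) (Fin (r + 1)) F :=
  Matrix.of fun i j => α i ^ (j : ℕ)

/-- The `(r+1) × (r+1)` Vandermonde matrix `G_n` with row nodes
`α_n, β_1, …, β_r` (where `β_i` plays the role of `α_{N+i}`). -/
def Gmat (α : Fin N → F) (β : Fin r → F) (n : Fin N) :
    Matrix (Fin (r + 1)) (Fin (r + 1)) F :=
  Matrix.of fun i j => ((Fin.cons (α n) β : Fin (r + 1) → F) i) ^ (j : ℕ)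

/-- The `(r+1) × r` matrix `G̃` whose first row is zero and whose row `i+1`
is the Vandermonde row `(1, β_i, …, β_i^{r-1})`. -/
def Gtil (β : Fin r → F) : Matrix (Fin (r + 1)) (Fin r) F :=
  Matrix.of fun i j => ((Fin.cons 0 (fun i' => β i' ^ (j : ℕ)) : Fin (r + 1) → F) i)

/-- The matrix `S_n = V · G_n⁻¹`. -/
noncomputable def Smat (α : Fin N → F) (β : Fin r → F) (n : Fin N) :
    Matrix (Fin N) (Fin (r + 1)) F :=
  Vmat α * (Gmat α β n)⁻¹

/-!
Since `S_n G_n = V`, the masked shares are `m = rows_{N'}(S_n) (G_n w + G̃ q)`. The matrix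
`rows_{N'}(S_n) = rows_{N'}(V) G_n⁻¹` is a product of a Vandermonde matrix with distinct nodes and
the inverse of another, hence invertible, so it recovers `G_n w + G̃ q`. The first row of `G_n` is
the `n`-th row of `V` and the first row of `G̃` is zero, so the first entry is `(V w)_n`.
-/

open Function Matrix

theorem Fin.cons_injective_of_injective_sumElim {ι γ : Type*} {α : ι → γ} {β : Fin r → γ}
    (h : Injective (Sum.elim α β)) (i : ι) : Injective (Fin.cons (α i) β : Fin (r + 1) → γ) := by
  refine Fin.cons_injective_iff.2 ⟨?_, h.comp Sum.inr_injective⟩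
  rintro ⟨j, hj⟩
  exact Sum.inl_ne_inr (@h (Sum.inr j) (Sum.inl i) hj).symm

section

variable {α : Fin N → F} {β : Fin r → F} {n : Fin N}

theorem Gmat_eq_vandermonde : Gmat α β n = vandermonde (Fin.cons (α n) β) := rfl

theorem Vmat_submatrix_eq_vandermonde (e : Fin (r + 1) → Fin N) :
    (Vmat α).submatrix e id = vandermonde (α ∘ e) := rfl

theorem isUnit_det_Gmat (h : Injective (Sum.elim α β)) : IsUnit (Gmat α β n).det := by
  rw [Gmat_eq_vandermonde, isUnit_iff_ne_zero, det_vandermonde_ne_zero_iff]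
  exact Fin.cons_injective_of_injective_sumElim h n

theorem Smat_mul_Gmat (h : Injective (Sum.elim α β)) : Smat α β n * Gmat α β n = Vmat α :=
  nonsing_inv_mul_cancel_right _ _ (isUnit_det_Gmat h)

theorem Smat_submatrix (e : Fin (r + 1) → Fin N) :
    (Smat α β n).submatrix e id = (Vmat α).submatrix e id * (Gmat α β n)⁻¹ :=
  (submatrix_mul (Vmat α) (Gmat α β n)⁻¹ e id id bijective_id).trans (by rw [submatrix_id_id])

theorem isUnit_det_Smat_submatrix (h : Injective (Sum.elim α β)) {e : Fin (r + 1) → Fin N}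
    (he : Injective e) : IsUnit ((Smat α β n).submatrix e id).det := by
  have hα : Injective α := h.comp Sum.inl_injective
  rw [Smat_submatrix, det_mul, Vmat_submatrix_eq_vandermonde]
  refine .mul ?_ (isUnit_nonsing_inv_det _ (isUnit_det_Gmat h))
  rw [isUnit_iff_ne_zero, det_vandermonde_ne_zero_iff]
  exact hα.comp he

theorem Smat_submatrix_mulVec (h : Injective (Sum.elim α β)) (e : Fin (r + 1) → Fin N)
    (w : Fin (r + 1) → F) (q : Fin r → F) :
    (Smat α β n).submatrix e id *ᵥ (Gmat α β n *ᵥ w + Gtil β *ᵥ q)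
      = fun i => (Vmat α *ᵥ w) (e i) + ((Smat α β n * Gtil β) *ᵥ q) (e i) := by
  funext i
  change (Smat α β n *ᵥ (Gmat α β n *ᵥ w + Gtil β *ᵥ q)) (e i) = _
  rw [mulVec_add, mulVec_mulVec, mulVec_mulVec, Smat_mul_Gmat h, Pi.add_apply]

theorem Gmat_mulVec_apply_zero (w : Fin (r + 1) → F) : (Gmat α β n *ᵥ w) 0 = (Vmat α *ᵥ w) n :=
  rfl

theorem Gtil_mulVec_apply_zero (q : Fin r → F) : (Gtil β *ᵥ q) 0 = 0 := by
  simp [Gtil, mulVec, dotProduct]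

end

theorem helper_reconstruction_general
    {F : Type} [Field F] (N r : ℕ)
    (α : Fin N → F) (β : Fin r → F)
    (hinj : Function.Injective (Sum.elim α β))
    (n : Fin N)
    (N' : Finset (Fin N)) (hN' : N'.card = r + 1)
    (w : Fin (r + 1) → F) (q : Fin r → F)
    (m : Fin (r + 1) → F)
    (hm : ∀ i : Fin (r + 1),
      m i = (Vmat α).mulVec w ((N'.orderIsoOfFin hN' i : N') : Fin N)
          + (Smat α β n * Gtil β).mulVec q ((N'.orderIsoOfFin hN' i : N') : Fin N)) :
    (((Smat α β n).submatrix
        (fun i : Fin (r + 1) => ((N'.orderIsoOfFin hN' i : N') : Fin N)) id)⁻¹.mulVec m) 0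
      = (Vmat α).mulVec w n := by
  set e : Fin (r + 1) → Fin N := fun i => ((N'.orderIsoOfFin hN' i : N') : Fin N)
  have he : Injective e := Subtype.val_injective.comp (N'.orderIsoOfFin hN').injective
  have := invertibleOfIsUnitDet _ (isUnit_det_Smat_submatrix (n := n) hinj he)
  have hshares : m = (Smat α β n).submatrix e id *ᵥ (Gmat α β n *ᵥ w + Gtil β *ᵥ q) := by
    rw [Smat_submatrix_mulVec hinj]
    exact funext hm
  rw [inv_mulVec_eq_vec hshares, Pi.add_apply, Gmat_mulVec_apply_zero, Gtil_mulVec_apply_zero,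
    add_zero]

/-- Exact reconstruction of the missing message `(Vw)_n` from the
masked shares `m_i = (Vw)_i + (S_n G̃ q)_i`, `i ∈ N'`, where `|N'| = N_r = r+1`:
`e_1ᵀ (rows_{N'}(S_n))⁻¹ m = (Vw)_n`. -/
theorem helper_reconstruction
    {F : Type} [Field F] (N r : ℕ) (hN : 1 ≤ N)
    (α : Fin N → F) (β : Fin r → F)
    (hinj : Function.Injective (Sum.elim α β))
    (h0 : ∀ x : Fin N ⊕ Fin r, Sum.elim α β x ≠ 0)
    (n : Fin N)
    (N' : Finset (Fin N)) (hN' : N'.card = r + 1)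
    (w : Fin (r + 1) → F) (q : Fin r → F)
    (m : Fin (r + 1) → F)
    (hm : ∀ i : Fin (r + 1),
      m i = (Vmat α).mulVec w ((N'.orderIsoOfFin hN' i : N') : Fin N)
          + (Smat α β n * Gtil β).mulVec q ((N'.orderIsoOfFin hN' i : N') : Fin N)) :
    (((Smat α β n).submatrix
        (fun i : Fin (r + 1) => ((N'.orderIsoOfFin hN' i : N') : Fin N)) id)⁻¹.mulVec m) 0
      = (Vmat α).mulVec w n :=
  helper_reconstruction_general N r α β hinj n N' hN' w q m hm
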